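/- arXiv:2502.00119 — 2 statements merged into one kernel-verified Lean document; each statement's English description precedes it below -/
import Mathlib

section
/- Let F : H → H be monotone and L-Lipschitz on a real Hilbert space, γ ∈ (0, 1/L), and suppose F has a zero. If (zᵏ) are extragradient iterates z̄ᵏ = zᵏ - γ F(zᵏ), zᵏ⁺¹ = zᵏ - γ F(z̄ᵏ), then k‖F(zᵏ)‖² → 0 as k → ∞ (i.e., ‖F(zᵏ)‖² ∈ o(1/k)). -/
/-!
Each extragradient step is Fejér monotone with respect to a zero `z⋆` of `F`, with a gain of
`γ² (1 - γ²L²) ‖F zᵏ‖²`, so `∑ ‖F zᵏ‖² < ∞`. Monotonicity and Lipschitz continuity also make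
`‖F zᵏ‖` nonincreasing, and a nonincreasing summable sequence `bₖ` satisfies `k bₖ → 0`.
-/

open Filter Topology
open scoped RealInnerProductSpace

lemma summable_of_le_sub_succ {b g : ℕ → ℝ} (hb : ∀ k, 0 ≤ b k) (hg : ∀ k, 0 ≤ g k)
    (h : ∀ k, b k ≤ g k - g (k + 1)) : Summable b := by
  refine summable_of_sum_range_le hb (c := g 0) fun n => ?_
  calc ∑ k ∈ Finset.range n, b k ≤ ∑ k ∈ Finset.range n, (g k - g (k + 1)) :=
        Finset.sum_le_sum fun k _ => h k
    _ = g 0 - g n := Finset.sum_range_sub' g n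
    _ ≤ g 0 := sub_le_self _ (hg n)

lemma tendsto_nat_mul_of_antitone_of_summable {b : ℕ → ℝ} (hanti : Antitone b)
    (hsum : Summable b) : Tendsto (fun k : ℕ => (k : ℝ) * b k) atTop (𝓝 0) := by
  have hnn : ∀ k, 0 ≤ b k := fun k => hanti.le_of_tendsto hsum.tendsto_atTop_zero k
  -- `k bₖ ≤ 2 (k - ⌊k/2⌋) bₖ ≤ 2 ∑_{⌊k/2⌋ ≤ j < k} bⱼ`, a tail of the series.
  have hbound : ∀ k : ℕ, (k : ℝ) * b k ≤ 2 * ∑' j, b (j + k / 2) := by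
    intro k
    have hcard : (k : ℝ) ≤ 2 * ((k - k / 2 : ℕ) : ℝ) := by
      exact_mod_cast (by omega : k ≤ 2 * (k - k / 2))
    have hblock : ((k - k / 2 : ℕ) : ℝ) * b k ≤ ∑ j ∈ Finset.range (k - k / 2), b (j + k / 2) := by
      simpa using Finset.card_nsmul_le_sum (Finset.range (k - k / 2)) (fun j => b (j + k / 2))
        (b k) fun j hj => hanti (by rw [Finset.mem_range] at hj; omega)
    have htail := (hsum.comp_injective (add_left_injective (k / 2))).sum_le_tsum
      (Finset.range (k - k / 2)) fun j _ => hnn (j + k / 2)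
    calc (k : ℝ) * b k ≤ 2 * ((k - k / 2 : ℕ) : ℝ) * b k :=
          mul_le_mul_of_nonneg_right hcard (hnn k)
      _ ≤ 2 * ∑' j, b (j + k / 2) := by
          rw [mul_assoc]
          exact mul_le_mul_of_nonneg_left (hblock.trans htail) zero_le_two
  have hlim : Tendsto (fun k : ℕ => 2 * ∑' j, b (j + k / 2)) atTop (𝓝 0) := by
    simpa using ((tendsto_sum_nat_add b).comp (Nat.tendsto_div_const_atTop two_ne_zero)).const_mul 2
  exact squeeze_zero (fun k => mul_nonneg (Nat.cast_nonneg k) (hnn k)) hbound hlim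

section Extragradient

variable {H : Type*} [NormedAddCommGroup H] [InnerProductSpace ℝ H]

lemma norm_le_norm_of_inner_nonneg_of_norm_sub_le {a b c : H} (hinner : 0 ≤ ⟪a - c, b⟫)
    (hnorm : ‖c - b‖ ≤ ‖a - b‖) : ‖c‖ ≤ ‖a‖ := by
  have hc : ‖c‖ ^ 2 = ‖b‖ ^ 2 + 2 * ⟪b, c - b⟫ + ‖c - b‖ ^ 2 := by
    simpa using norm_add_sq_real b (c - b)
  have ha : ‖a‖ ^ 2 = ‖b‖ ^ 2 + 2 * ⟪b, a - b⟫ + ‖a - b‖ ^ 2 := by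
    simpa using norm_add_sq_real b (a - b)
  have hdiff : ⟪b, c - b⟫ - ⟪b, a - b⟫ = -⟪a - c, b⟫ := by
    rw [← inner_sub_right, real_inner_comm, ← inner_neg_left]
    congr 1
    abel
  have hsq : ‖c - b‖ ^ 2 ≤ ‖a - b‖ ^ 2 := pow_le_pow_left₀ (norm_nonneg _) hnorm 2
  exact (sq_le_sq₀ (norm_nonneg c) (norm_nonneg a)).mp (by linarith)

def extragradientStep (F : H → H) (γ : ℝ) (z : H) : H :=
  z - γ • F (z - γ • F z)

variable {F : H → H} {L γ : ℝ}

lemma norm_apply_extragradientStep_le (hmono : ∀ x y : H, 0 ≤ ⟪F x - F y, x - y⟫)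
    (hlip : ∀ x y : H, ‖F x - F y‖ ≤ L * ‖x - y‖) (hγ : 0 < γ) (hγL : γ * L ≤ 1) (z : H) :
    ‖F (extragradientStep F γ z)‖ ≤ ‖F z‖ := by
  set zb := z - γ • F z
  set zn := extragradientStep F γ z
  apply norm_le_norm_of_inner_nonneg_of_norm_sub_le (b := F zb)
  · have hm := hmono z zn
    rw [show z - zn = γ • F zb by simp [zn, extragradientStep, zb], real_inner_smul_right] at hm
    exact (mul_nonneg_iff_of_pos_left hγ).mp hm
  · have hstep : zn - zb = γ • (F z - F zb) := by
      simp only [zn, extragradientStep, zb, smul_sub]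
      abel
    calc ‖F zn - F zb‖ ≤ L * ‖zn - zb‖ := hlip zn zb
      _ = γ * L * ‖F z - F zb‖ := by
          rw [hstep, norm_smul, Real.norm_of_nonneg hγ.le]
          ring
      _ ≤ ‖F z - F zb‖ := mul_le_of_le_one_left (norm_nonneg _) hγL

lemma norm_extragradientStep_sub_sq_add_le (hmono : ∀ x y : H, 0 ≤ ⟪F x - F y, x - y⟫)
    (hlip : ∀ x y : H, ‖F x - F y‖ ≤ L * ‖x - y‖) (hγ : 0 ≤ γ) {zs : H} (hzs : F zs = 0)
    (z : H) :
    ‖extragradientStep F γ z - zs‖ ^ 2 + γ ^ 2 * (1 - (γ * L) ^ 2) * ‖F z‖ ^ 2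
      ≤ ‖z - zs‖ ^ 2 := by
  set zb := z - γ • F z
  set zn := extragradientStep F γ z
  have hexpand : ∀ x : H, ‖x - zs‖ ^ 2 = ‖zb - zs‖ ^ 2 + 2 * ⟪zb - zs, x - zb⟫ + ‖x - zb‖ ^ 2 :=
    fun x => by simpa using norm_add_sq_real (zb - zs) (x - zb)
  have hcross : ⟪zb - zs, zn - zb⟫ - ⟪zb - zs, z - zb⟫ = -(γ * ⟪F zb - F zs, zb - zs⟫) := by
    rw [← inner_sub_right, hzs, sub_zero, real_inner_comm,
      show zn - zb - (z - zb) = -(γ • F zb) by simp [zn, extragradientStep, zb],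
      inner_neg_left, real_inner_smul_left]
  have hz : ‖z - zb‖ = γ * ‖F z‖ := by
    simp [zb, norm_smul, Real.norm_of_nonneg hγ]
  have hzn : ‖zn - zb‖ ≤ γ * L * (γ * ‖F z‖) := by
    have hstep : zn - zb = γ • (F z - F zb) := by
      simp only [zn, extragradientStep, zb, smul_sub]
      abel
    calc ‖zn - zb‖ = γ * ‖F z - F zb‖ := by rw [hstep, norm_smul, Real.norm_of_nonneg hγ]
      _ ≤ γ * (L * ‖z - zb‖) := mul_le_mul_of_nonneg_left (hlip z zb) hγ
      _ = γ * L * (γ * ‖F z‖) := by rw [hz]; ring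
  have hzn_sq := pow_le_pow_left₀ (norm_nonneg _) hzn 2
  have hmono' := mul_nonneg hγ (hmono zb zs)
  rw [hexpand zn, hexpand z, hz]
  nlinarith

end Extragradient

theorem stmt3_general {H : Type*} [NormedAddCommGroup H] [InnerProductSpace ℝ H]
    (F : H → H) (L γ : ℝ) (hL : 0 < L)
    (hmono : ∀ x y : H, 0 ≤ ⟪F x - F y, x - y⟫)
    (hlip : ∀ x y : H, ‖F x - F y‖ ≤ L * ‖x - y‖)
    (hγ0 : 0 < γ) (hγ1 : γ < 1 / L)
    (hzer : ∃ zstar : H, F zstar = 0)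
    (z zb : ℕ → H)
    (hzb : ∀ k, zb k = z k - γ • F (z k))
    (hz : ∀ k, z (k + 1) = z k - γ • F (zb k)) :
    Filter.Tendsto (fun k : ℕ => (k : ℝ) * ‖F (z k)‖ ^ 2) Filter.atTop (nhds 0) := by
  obtain ⟨zs, hzs⟩ := hzer
  have hγL : γ * L < 1 := (lt_div_iff₀ hL).mp hγ1
  have hstep : ∀ k, z (k + 1) = extragradientStep F γ (z k) := fun k => by
    rw [hz, hzb, extragradientStep]
  have hanti : Antitone fun k => ‖F (z k)‖ ^ 2 := antitone_nat_of_succ_le fun k => by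
    rw [hstep]
    exact pow_le_pow_left₀ (norm_nonneg _)
      (norm_apply_extragradientStep_le hmono hlip hγ0 hγL.le (z k)) 2
  have hC : 0 < γ ^ 2 * (1 - (γ * L) ^ 2) := by
    have : 0 < γ * L := mul_pos hγ0 hL
    have : 0 < 1 - (γ * L) ^ 2 := by nlinarith
    positivity
  have hsum : Summable fun k => γ ^ 2 * (1 - (γ * L) ^ 2) * ‖F (z k)‖ ^ 2 :=
    summable_of_le_sub_succ (fun k => by positivity) (fun k => sq_nonneg ‖z k - zs‖)
      fun k => by
        have := norm_extragradientStep_sub_sq_add_le hmono hlip hγ0.le hzs (z k)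
        rw [hstep]
        linarith
  exact tendsto_nat_mul_of_antitone_of_summable hanti ((summable_mul_left_iff hC.ne').mp hsum)

theorem stmt3 {H : Type*} [NormedAddCommGroup H] [InnerProductSpace ℝ H] [CompleteSpace H]
    (F : H → H) (L γ : ℝ) (hL : 0 < L)
    (hmono : ∀ x y : H, 0 ≤ ⟪F x - F y, x - y⟫)
    (hlip : ∀ x y : H, ‖F x - F y‖ ≤ L * ‖x - y‖)
    (hγ0 : 0 < γ) (hγ1 : γ < 1 / L)
    (hzer : ∃ zstar : H, F zstar = 0)
    (z zb : ℕ → H)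
    (hzb : ∀ k, zb k = z k - γ • F (z k))
    (hz : ∀ k, z (k + 1) = z k - γ • F (zb k)) :
    Filter.Tendsto (fun k : ℕ => (k : ℝ) * ‖F (z k)‖ ^ 2) Filter.atTop (nhds 0) :=
  stmt3_general F L γ hL hmono hlip hγ0 hγ1 hzer z zb hzb hz
end

section
/- Let F, g, γ with γL ≤ 1 be as in the extragradient setting and z⋆ a zero of F + ∂g. With Vₖ defined via the Lyapunov function V(z, z̄, z⁺) = (2/γ)⟨z - z⁺, F z - F z̄⟩ + (1/γ²)‖z⁺ - z̄‖² + (1/γ²)‖z - z⁺‖² evaluated at the extragradient iterates, it holds that ‖zᵏ⁺¹ - z⋆‖² ≤ ‖zᵏ - z⋆‖² - α(γ, L)·Vₖ for every k, where α(γ, L) = (γ²/2)(√(5 - 4γ²L²) - 1) ≥ 0. -/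
open scoped RealInnerProductSpace

/-- `g` is proper: finite somewhere and never `⊥`. -/
def IsProperEF {H : Type*} (g : H → EReal) : Prop :=
  (∃ x, g x ≠ ⊤) ∧ ∀ x, g x ≠ ⊥

/-- `g` is convex (extended-real-valued). -/
def IsConvexEF {H : Type*} [NormedAddCommGroup H] [InnerProductSpace ℝ H]
    (g : H → EReal) : Prop :=
  ∀ x y : H, ∀ a b : ℝ, 0 ≤ a → 0 ≤ b → a + b = 1 →
    g (a • x + b • y) ≤ (a : EReal) * g x + (b : EReal) * g y

/-- `ξ` is a subgradient of `g` at `z`, i.e. `ξ ∈ ∂g(z)`. -/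
def InSubdiff {H : Type*} [NormedAddCommGroup H] [InnerProductSpace ℝ H]
    (g : H → EReal) (z ξ : H) : Prop :=
  ∀ y : H, g z + ((⟪ξ, y - z⟫ : ℝ) : EReal) ≤ g y

/-- `p = prox_{γ g}(x)`, i.e. `p` minimizes `g(·) + (1/(2γ))‖x - ·‖²`. -/
def IsProx {H : Type*} [NormedAddCommGroup H] [InnerProductSpace ℝ H]
    (g : H → EReal) (γ : ℝ) (x p : H) : Prop :=
  ∀ y : H, g p + ((1 / (2 * γ) * ‖x - p‖ ^ 2 : ℝ) : EReal) ≤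
    g y + ((1 / (2 * γ) * ‖x - y‖ ^ 2 : ℝ) : EReal)

/-- The Lyapunov function `V`. -/
noncomputable def lyapV {H : Type*} [NormedAddCommGroup H] [InnerProductSpace ℝ H]
    (F : H → H) (γ : ℝ) (z zb zp : H) : ℝ :=
  (2 / γ) * ⟪z - zp, F z - F zb⟫ + (1 / γ ^ 2) * ‖zp - zb‖ ^ 2 + (1 / γ ^ 2) * ‖z - zp‖ ^ 2

/-!
The prox step is characterised by a subgradient inequality, `γ⁻¹ (x - prox x) ∈ ∂g(prox x)`,
obtained by testing the minimality of the prox point along segments and letting the step tend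
to `0`. Writing `a = zᵏ - z̄ᵏ`, `b = z̄ᵏ - zᵏ⁺¹`, `d = γ (F zᵏ - F z̄ᵏ)`, cyclic monotonicity of
`∂g` at `z̄ᵏ, zᵏ⁺¹, z⋆` together with the monotonicity of `F` gives the classical extragradient
estimate `‖a‖² + ‖b‖² + 2⟪d, b⟫ ≤ ‖zᵏ - z⋆‖² - ‖zᵏ⁺¹ - z⋆‖²`. Firm nonexpansiveness of the prox
gives `‖b‖² + ⟪d, b⟫ ≤ 0` and the Lipschitz bound gives `‖d‖² ≤ γ²L² ‖a‖²`; `γ² V` is the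
quadratic form `2⟪a + b, d⟫ + ‖b‖² + ‖a + b‖²`, and a sum-of-squares certificate bounds
`c` times it by the left side of the estimate as soon as `c² + c ≤ 1 - γ²L²`. The largest such
`c` gives `α(γ, L) = γ² c`.
-/

open Filter Topology

lemma EReal.ne_top_of_add_coe_le {a b : EReal} {r : ℝ} (h : a + r ≤ b) (hb : b ≠ ⊤) :
    a ≠ ⊤ := by
  rintro rfl
  rw [EReal.top_add_coe] at h
  exact hb (top_le_iff.mp h)

lemma nonpos_of_forall_le_mul {K M : ℝ} (h : ∀ t ∈ Set.Ioc (0 : ℝ) 1, K ≤ t * M) : K ≤ 0 := by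
  have hlim : Tendsto (fun t : ℝ => t * M) (𝓝[>] 0) (𝓝 0) :=
    ((continuous_mul_const M).tendsto' 0 0 (zero_mul M)).mono_left nhdsWithin_le_nhds
  exact ge_of_tendsto hlim (eventually_of_mem (Ioc_mem_nhdsGT zero_lt_one) h)

section Prox

variable {H : Type*} [NormedAddCommGroup H] [InnerProductSpace ℝ H] {g : H → EReal}

lemma InSubdiff.ne_top (hg : IsProperEF g) {z ξ : H} (h : InSubdiff g z ξ) : g z ≠ ⊤ :=
  have ⟨y, hy⟩ := hg.1
  EReal.ne_top_of_add_coe_le (h y) hy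

lemma IsProx.ne_top (hg : IsProperEF g) {γ : ℝ} {x p : H} (h : IsProx g γ x p) : g p ≠ ⊤ :=
  have ⟨y, hy⟩ := hg.1
  EReal.ne_top_of_add_coe_le (h y) (EReal.add_lt_top hy (EReal.coe_ne_top _)).ne

lemma InSubdiff.inner_le_toReal_sub (hg : IsProperEF g) {z ξ y : H} (h : InSubdiff g z ξ)
    (hy : g y ≠ ⊤) : ⟪ξ, y - z⟫ ≤ (g y).toReal - (g z).toReal := by
  have h' := h y
  rw [← EReal.coe_toReal (h.ne_top hg) (hg.2 z), ← EReal.coe_toReal hy (hg.2 y),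
    ← EReal.coe_add, EReal.coe_le_coe_iff] at h'
  linarith

lemma InSubdiff.inner_sub_nonneg (hg : IsProperEF g) {x y ξ η : H} (hx : InSubdiff g x ξ)
    (hy : InSubdiff g y η) : 0 ≤ ⟪ξ - η, x - y⟫ := by
  have hxy := hx.inner_le_toReal_sub hg (hy.ne_top hg)
  have hyx := hy.inner_le_toReal_sub hg (hx.ne_top hg)
  rw [← neg_sub x y, inner_neg_right] at hxy
  rw [inner_sub_left]
  linarith

lemma InSubdiff.cyclic_inner_nonpos (hg : IsProperEF g) {x y z ξ η ζ : H}
    (hx : InSubdiff g x ξ) (hy : InSubdiff g y η) (hz : InSubdiff g z ζ) :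
    ⟪ξ, y - x⟫ + ⟪η, z - y⟫ + ⟪ζ, x - z⟫ ≤ 0 := by
  linarith [hx.inner_le_toReal_sub hg (hy.ne_top hg), hy.inner_le_toReal_sub hg (hz.ne_top hg),
    hz.inner_le_toReal_sub hg (hx.ne_top hg)]

lemma norm_sub_add_smul_sub_sq (x p y : H) (t : ℝ) :
    ‖x - ((1 - t) • p + t • y)‖ ^ 2
      = ‖x - p‖ ^ 2 - 2 * t * ⟪x - p, y - p⟫ + t ^ 2 * ‖y - p‖ ^ 2 := by
  have hv : x - ((1 - t) • p + t • y) = (x - p) - t • (y - p) := by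
    rw [smul_sub, sub_smul, one_smul]
    abel
  rw [hv, norm_sub_sq_real, real_inner_smul_right, norm_smul, mul_pow, Real.norm_eq_abs, sq_abs]
  ring

lemma IsProx.inSubdiff (hg : IsProperEF g) (hconv : IsConvexEF g) {γ : ℝ} (hγ : 0 < γ)
    {x p : H} (h : IsProx g γ x p) : InSubdiff g p (γ⁻¹ • (x - p)) := by
  intro y
  by_cases hy : g y = ⊤
  · rw [hy]
    exact le_top
  obtain ⟨gp, hgp⟩ : ∃ r : ℝ, g p = r := ⟨_, (EReal.coe_toReal (h.ne_top hg) (hg.2 p)).symm⟩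
  obtain ⟨gy, hgy⟩ : ∃ r : ℝ, g y = r := ⟨_, (EReal.coe_toReal hy (hg.2 y)).symm⟩
  rw [hgp, hgy, ← EReal.coe_add, EReal.coe_le_coe_iff, real_inner_smul_left]
  suffices γ⁻¹ * ⟪x - p, y - p⟫ + gp - gy ≤ 0 by linarith
  -- test the prox inequality at the points `(1 - t) • p + t • y` and let `t → 0⁺`
  refine nonpos_of_forall_le_mul (M := γ⁻¹ / 2 * ‖y - p‖ ^ 2) fun t ⟨ht0, ht1⟩ => ?_
  have hseg := le_trans (h ((1 - t) • p + t • y))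
    (add_le_add_left (hconv p y (1 - t) t (by linarith) ht0.le (by ring)) _)
  rw [hgp, hgy, ← EReal.coe_mul, ← EReal.coe_mul, ← EReal.coe_add, ← EReal.coe_add,
    ← EReal.coe_add, EReal.coe_le_coe_iff, norm_sub_add_smul_sub_sq] at hseg
  have : t * (γ⁻¹ * ⟪x - p, y - p⟫ + gp - gy) ≤ t * (t * (γ⁻¹ / 2 * ‖y - p‖ ^ 2)) := by
    field_simp at hseg ⊢
    nlinarith
  exact le_of_mul_le_mul_left this ht0

lemma IsProx.norm_sub_sq_le_inner (hg : IsProperEF g) (hconv : IsConvexEF g) {γ : ℝ}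
    (hγ : 0 < γ) {x y p q : H} (hp : IsProx g γ x p) (hq : IsProx g γ y q) :
    ‖p - q‖ ^ 2 ≤ ⟪x - y, p - q⟫ := by
  have hmono := (hp.inSubdiff hg hconv hγ).inner_sub_nonneg hg (hq.inSubdiff hg hconv hγ)
  rw [← smul_sub, real_inner_smul_left, mul_nonneg_iff_of_pos_left (inv_pos.2 hγ),
    sub_sub_sub_comm, inner_sub_left, real_inner_self_eq_norm_sq] at hmono
  linarith

variable {F : H → H} {γ : ℝ} {z zb zp zs : H}

lemma extragradient_norm_sq_add_inner_nonpos (hg : IsProperEF g) (hconv : IsConvexEF g)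
    (hγ : 0 < γ) (hzb : IsProx g γ (z - γ • F z) zb) (hzp : IsProx g γ (z - γ • F zb) zp) :
    ‖zb - zp‖ ^ 2 + ⟪γ • (F z - F zb), zb - zp⟫ ≤ 0 := by
  have h := hzb.norm_sub_sq_le_inner hg hconv hγ hzp
  rw [sub_sub_sub_cancel_left, ← smul_sub, ← neg_sub (F z), smul_neg, inner_neg_left] at h
  linarith

lemma extragradient_descent (hmono : ∀ x y : H, 0 ≤ ⟪F x - F y, x - y⟫)
    (hg : IsProperEF g) (hconv : IsConvexEF g) (hγ : 0 < γ)
    (hzb : IsProx g γ (z - γ • F z) zb) (hzp : IsProx g γ (z - γ • F zb) zp)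
    (hzs : InSubdiff g zs (-F zs)) :
    ‖z - zb‖ ^ 2 + ‖zb - zp‖ ^ 2 + 2 * ⟪γ • (F z - F zb), zb - zp⟫
      ≤ ‖z - zs‖ ^ 2 - ‖zp - zs‖ ^ 2 := by
  have hcyc := (hzb.inSubdiff hg hconv hγ).cyclic_inner_nonpos hg (hzp.inSubdiff hg hconv hγ) hzs
  have hF := hmono zb zs
  rw [real_inner_smul_left, real_inner_smul_left] at hcyc
  have hcyc' : ⟪z - γ • F z - zb, zp - zb⟫ + ⟪z - γ • F zb - zp, zs - zp⟫
      + γ * ⟪-F zs, zb - zs⟫ ≤ 0 := by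
    have := mul_nonpos_of_nonneg_of_nonpos hγ.le hcyc
    field_simp at this
    linarith
  simp only [← real_inner_self_eq_norm_sq, inner_sub_left, inner_sub_right, inner_neg_left,
    real_inner_smul_left] at hcyc' hF ⊢
  simp only [real_inner_comm] at hcyc' hF ⊢
  linarith [mul_nonneg hγ.le hF]

lemma sq_mul_lyapV (hγ : γ ≠ 0) :
    γ ^ 2 * lyapV F γ z zb zp
      = 2 * ⟪z - zp, γ • (F z - F zb)⟫ + ‖zb - zp‖ ^ 2 + ‖z - zp‖ ^ 2 := by
  rw [lyapV, real_inner_smul_right, norm_sub_rev zp]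
  field_simp

lemma mul_lyap_form_le {a b d : H} {c : ℝ} (hc : 0 ≤ c) (hb : ‖b‖ ^ 2 + ⟪d, b⟫ ≤ 0)
    (hd : ‖d‖ ^ 2 ≤ (1 - c - c ^ 2) * ‖a‖ ^ 2) :
    c * (2 * ⟪a + b, d⟫ + ‖b‖ ^ 2 + ‖a + b‖ ^ 2) ≤ ‖a‖ ^ 2 + ‖b‖ ^ 2 + 2 * ⟪d, b⟫ := by
  -- the difference is `-2c (‖b‖² + ⟪d, b⟫) + ((1 - c - c²)‖a‖² - ‖d‖²) + ‖d + b - c a‖²`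
  have hsq : 0 ≤ ‖d + b - c • a‖ ^ 2 := sq_nonneg _
  simp only [norm_sub_sq_real, norm_add_sq_real, inner_add_left, real_inner_smul_right,
    norm_smul, mul_pow, Real.norm_eq_abs, sq_abs] at hsq
  rw [norm_add_sq_real, inner_add_left]
  simp only [real_inner_comm] at hb hsq ⊢
  linarith [mul_nonpos_of_nonneg_of_nonpos hc hb]

end Prox

/-- The paper's `α(γ, L)` is `γ ^ 2 * egWeight (γ * L)`; `egWeight t` is the nonnegative root
of `c ^ 2 + c = 1 - t ^ 2`. -/
noncomputable def egWeight (t : ℝ) : ℝ := (√(5 - 4 * t ^ 2) - 1) / 2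

lemma egWeight_nonneg {t : ℝ} (ht : t ^ 2 ≤ 1) : 0 ≤ egWeight t := by
  have : 1 ≤ √(5 - 4 * t ^ 2) := Real.one_le_sqrt.2 (by linarith)
  unfold egWeight
  linarith

lemma one_sub_egWeight_sub_sq {t : ℝ} (ht : 4 * t ^ 2 ≤ 5) :
    1 - egWeight t - egWeight t ^ 2 = t ^ 2 := by
  have := Real.sq_sqrt (sub_nonneg.2 ht)
  unfold egWeight
  linear_combination (-1 / 4 : ℝ) * this

theorem stmt5_general {H : Type*} [NormedAddCommGroup H] [InnerProductSpace ℝ H]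
    (F : H → H) (L γ : ℝ) (hL : 0 < L)
    (hmono : ∀ x y : H, 0 ≤ ⟪F x - F y, x - y⟫)
    (hlip : ∀ x y : H, ‖F x - F y‖ ≤ L * ‖x - y‖)
    (g : H → EReal) (hproper : IsProperEF g) (hconv : IsConvexEF g)
    (hγ0 : 0 < γ) (hγ1 : γ * L ≤ 1)
    (zstar : H) (hzstar : InSubdiff g zstar (-F zstar))
    (z zb : ℕ → H)
    (hzb : ∀ k, IsProx g γ (z k - γ • F (z k)) (zb k))
    (hz : ∀ k, IsProx g γ (z k - γ • F (zb k)) (z (k + 1))) :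
    0 ≤ γ ^ 2 / 2 * (Real.sqrt (5 - 4 * γ ^ 2 * L ^ 2) - 1) ∧
      ∀ k : ℕ,
        ‖z (k + 1) - zstar‖ ^ 2 ≤ ‖z k - zstar‖ ^ 2 -
          γ ^ 2 / 2 * (Real.sqrt (5 - 4 * γ ^ 2 * L ^ 2) - 1) *
            lyapV F γ (z k) (zb k) (z (k + 1)) := by
  have hγL : (γ * L) ^ 2 ≤ 1 := by nlinarith [mul_pos hγ0 hL]
  have hα : γ ^ 2 / 2 * (√(5 - 4 * γ ^ 2 * L ^ 2) - 1) = egWeight (γ * L) * γ ^ 2 := by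
    rw [egWeight]
    ring_nf
  rw [hα]
  refine ⟨mul_nonneg (egWeight_nonneg hγL) (sq_nonneg γ), fun k => ?_⟩
  have hlipk : ‖γ • (F (z k) - F (zb k))‖ ^ 2
      ≤ (1 - egWeight (γ * L) - egWeight (γ * L) ^ 2) * ‖z k - zb k‖ ^ 2 := by
    rw [one_sub_egWeight_sub_sq (by linarith), norm_smul, Real.norm_of_nonneg hγ0.le]
    calc (γ * ‖F (z k) - F (zb k)‖) ^ 2 ≤ (γ * (L * ‖z k - zb k‖)) ^ 2 := by
          gcongr
          exact hlip _ _
      _ = (γ * L) ^ 2 * ‖z k - zb k‖ ^ 2 := by ring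
  have hbound := mul_lyap_form_le (egWeight_nonneg hγL)
    (extragradient_norm_sq_add_inner_nonpos hproper hconv hγ0 (hzb k) (hz k)) hlipk
  rw [sub_add_sub_cancel] at hbound
  rw [mul_assoc, sq_mul_lyapV hγ0.ne']
  linarith [extragradient_descent hmono hproper hconv hγ0 (hzb k) (hz k) hzstar]

theorem stmt5 {H : Type*} [NormedAddCommGroup H] [InnerProductSpace ℝ H] [CompleteSpace H]
    (F : H → H) (L γ : ℝ) (hL : 0 < L)
    (hmono : ∀ x y : H, 0 ≤ ⟪F x - F y, x - y⟫)
    (hlip : ∀ x y : H, ‖F x - F y‖ ≤ L * ‖x - y‖)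
    (g : H → EReal) (hproper : IsProperEF g) (hconv : IsConvexEF g)
    (hlsc : LowerSemicontinuous g)
    (hγ0 : 0 < γ) (hγ1 : γ * L ≤ 1)
    (zstar : H) (hzstar : InSubdiff g zstar (-F zstar))
    (z zb : ℕ → H)
    (hzb : ∀ k, IsProx g γ (z k - γ • F (z k)) (zb k))
    (hz : ∀ k, IsProx g γ (z k - γ • F (zb k)) (z (k + 1))) :
    0 ≤ γ ^ 2 / 2 * (Real.sqrt (5 - 4 * γ ^ 2 * L ^ 2) - 1) ∧
      ∀ k : ℕ,
        ‖z (k + 1) - zstar‖ ^ 2 ≤ ‖z k - zstar‖ ^ 2 -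
          γ ^ 2 / 2 * (Real.sqrt (5 - 4 * γ ^ 2 * L ^ 2) - 1) *
            lyapV F γ (z k) (zb k) (z (k + 1)) :=
  stmt5_general F L γ hL hmono hlip g hproper hconv hγ0 hγ1 zstar hzstar z zb hzb hz
end
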